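/- Let α ∈ ℝ, τ > 0, h > 0 and let x : ℤ × ℤ → ℝ be a grid function with x_s(n,i) ≠ 0 for all (n,i), satisfying the invariant scheme for the SMHD equations with horizontal bottom: x_tť(n,i) − α² x_sš(n,i) + [1/(x_s(n+1,i) x_s(n−1,i)) − 1/(x_s(n+1,i−1) x_s(n−1,i−1))]/h = 0 for all (n,i). Define T(n,i) = (1/2)( x_t(n,i)² + 1/x_s(n,i) + 1/x_s(n+1,i) + α² x_s(n,i) x_s(n+1,i) ) and S(n,i) = (1/2)( x_t(n,i+1) + x_t(n−1,i+1) )( 1/(x_s(n+1,i) x_s(n−1,i)) − α² x_s(n,i) ). Then the finite-difference conservation law of energy holds: (T(n,i) − T(n−1,i))/τ + (S(n,i) − S(n,i−1))/h = 0 for all (n,i). -/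

import Mathlib

/-! The energy balance at `(n, i)` is exactly the scheme's residual there multiplied by the
mean velocity `(x_t + x_ť) / 2`. The algebra closes because mixed differences commute (the
centred time difference of `x_s` is the space difference of `x_t + x_ť`) and because
`1 / x_s(n+1,i) - 1 / x_s(n-1,i) = -(x_s(n+1,i) - x_s(n-1,i)) / (x_s(n+1,i) x_s(n-1,i))`,
which is where `x_s ≠ 0` enters. -/

/-- Forward time difference on a uniform mesh with time step τ. -/
noncomputable def xt (τ : ℝ) (x : ℤ → ℤ → ℝ) (n i : ℤ) : ℝ := (x (n + 1) i - x n i) / τ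

/-- Forward space difference on a uniform mesh with space step h. -/
noncomputable def xs (h : ℝ) (x : ℤ → ℤ → ℝ) (n i : ℤ) : ℝ := (x n (i + 1) - x n i) / h

/-- Second time difference. -/
noncomputable def xtt (τ : ℝ) (x : ℤ → ℤ → ℝ) (n i : ℤ) : ℝ :=
  (x (n + 1) i - 2 * x n i + x (n - 1) i) / τ ^ 2

/-- Second space difference. -/
noncomputable def xss (h : ℝ) (x : ℤ → ℤ → ℝ) (n i : ℤ) : ℝ :=
  (x n (i + 1) - 2 * x n i + x n (i - 1)) / h ^ 2

/-- Conserved density of the finite-difference energy conservation law. -/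
noncomputable def Ten (α τ h : ℝ) (x : ℤ → ℤ → ℝ) (n i : ℤ) : ℝ :=
  (1 / 2) * ((xt τ x n i) ^ 2 + 1 / xs h x n i + 1 / xs h x (n + 1) i
    + α ^ 2 * xs h x n i * xs h x (n + 1) i)

/-- Flux of the finite-difference energy conservation law. -/
noncomputable def Sen (α τ h : ℝ) (x : ℤ → ℤ → ℝ) (n i : ℤ) : ℝ :=
  (1 / 2) * (xt τ x n (i + 1) + xt τ x (n - 1) (i + 1))
    * (1 / (xs h x (n + 1) i * xs h x (n - 1) i) - α ^ 2 * xs h x n i)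

noncomputable def smhdResidual (α τ h : ℝ) (x : ℤ → ℤ → ℝ) (n i : ℤ) : ℝ :=
  xtt τ x n i - α ^ 2 * xss h x n i
    + (1 / (xs h x (n + 1) i * xs h x (n - 1) i)
        - 1 / (xs h x (n + 1) (i - 1) * xs h x (n - 1) (i - 1))) / h

section GridDifferences

variable (τ h : ℝ) (x : ℤ → ℤ → ℝ) (n i : ℤ)

theorem xtt_eq_xt_sub_xt : xtt τ x n i = (xt τ x n i - xt τ x (n - 1) i) / τ := by
  simp only [xtt, xt, sub_add_cancel]
  ring

theorem xss_eq_xs_sub_xs : xss h x n i = (xs h x n i - xs h x n (i - 1)) / h := by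
  simp only [xss, xs, sub_add_cancel]
  ring

theorem xs_succ_sub_xs_pred_div :
    (xs h x (n + 1) i - xs h x (n - 1) i) / τ
      = (xt τ x n (i + 1) + xt τ x (n - 1) (i + 1) - (xt τ x n i + xt τ x (n - 1) i)) / h := by
  simp only [xs, xt, sub_add_cancel]
  ring

end GridDifferences

/-- `v, w` stand for the velocities at times `n, n - 1`, `a, b, c` for the values of `x_s` at
times `n + 1, n, n - 1`; primes shift one node to the left, `vp, wp` one node to the right. -/
theorem energy_balance_identity {α τ h v w vp wp a b c a' b' c' : ℝ} (ha : a ≠ 0) (hc : c ≠ 0)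
    (hcompat : (a - c) / τ = (vp + wp - (v + w)) / h) :
    ((1 / 2) * (v ^ 2 + 1 / b + 1 / a + α ^ 2 * b * a)
        - (1 / 2) * (w ^ 2 + 1 / c + 1 / b + α ^ 2 * c * b)) / τ
      + ((1 / 2) * (vp + wp) * (1 / (a * c) - α ^ 2 * b)
        - (1 / 2) * (v + w) * (1 / (a' * c') - α ^ 2 * b')) / h
      = (v + w) / 2 * ((v - w) / τ - α ^ 2 * ((b - b') / h)
          + (1 / (a * c) - 1 / (a' * c')) / h) := by
  have hinv : (a - c) / (a * c) = 1 / c - 1 / a := by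
    field_simp
  linear_combination (α ^ 2 * b - 1 / (a * c)) / 2 * hcompat + 1 / (2 * τ) * hinv

theorem energy_balance_eq_mul_smhdResidual {α τ h : ℝ} {x : ℤ → ℤ → ℝ}
    (hxs : ∀ n i, xs h x n i ≠ 0) (n i : ℤ) :
    (Ten α τ h x n i - Ten α τ h x (n - 1) i) / τ
        + (Sen α τ h x n i - Sen α τ h x n (i - 1)) / h
      = (xt τ x n i + xt τ x (n - 1) i) / 2 * smhdResidual α τ h x n i := by
  rw [smhdResidual, xtt_eq_xt_sub_xt, xss_eq_xs_sub_xs]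
  simp only [Ten, Sen, sub_add_cancel]
  exact energy_balance_identity (hxs _ _) (hxs _ _) (xs_succ_sub_xs_pred_div τ h x n i)

theorem fd_smhd_energy_general
    (α τ h : ℝ)
    (x : ℤ → ℤ → ℝ) (hxs : ∀ n i, xs h x n i ≠ 0)
    (scheme : ∀ n i : ℤ,
      xtt τ x n i - α ^ 2 * xss h x n i
        + (1 / (xs h x (n + 1) i * xs h x (n - 1) i)
            - 1 / (xs h x (n + 1) (i - 1) * xs h x (n - 1) (i - 1))) / h = 0) :
    ∀ n i : ℤ,
      (Ten α τ h x n i - Ten α τ h x (n - 1) i) / τ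
        + (Sen α τ h x n i - Sen α τ h x n (i - 1)) / h = 0 := by
  intro n i
  rw [energy_balance_eq_mul_smhdResidual hxs, smhdResidual, scheme n i, mul_zero]

/-- finite-difference energy conservation law for the invariant
SMHD scheme with horizontal bottom. -/
theorem fd_smhd_energy
    (α τ h : ℝ) (hτ : 0 < τ) (hh : 0 < h)
    (x : ℤ → ℤ → ℝ) (hxs : ∀ n i, xs h x n i ≠ 0)
    (scheme : ∀ n i : ℤ,
      xtt τ x n i - α ^ 2 * xss h x n i
        + (1 / (xs h x (n + 1) i * xs h x (n - 1) i)
            - 1 / (xs h x (n + 1) (i - 1) * xs h x (n - 1) (i - 1))) / h = 0) :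
    ∀ n i : ℤ,
      (Ten α τ h x n i - Ten α τ h x (n - 1) i) / τ
        + (Sen α τ h x n i - Sen α τ h x n (i - 1)) / h = 0 :=
  fd_smhd_energy_general α τ h x hxs scheme
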